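/- arXiv:1508.00956 — 6 statements merged into one kernel-verified Lean document; each statement's English description precedes it below -/
import Mathlib

section
/- For every t ≥ 0 and every word σ with |σ| ≤ t, the geodesic distance from σ to the empty word in G_t equals ω(σ): d_t(σ,∅) = ω(σ). -/
open Filter Finset

/-- A letter of the alphabet `{1,2,3}`. -/
abbrev Letter := Fin 3

/-- A word: a finite (possibly empty) sequence of letters. -/
abbrev Word := List Letter

/-- Adjacency of two words: `σ ≠ τ`, and writing `σ = β ++ σ'`, `τ = β ++ τ'` with `β`
the longest common prefix, either one of `σ'`, `τ'` is empty and the other uses at most two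
distinct letters, or `σ' = i j^k` and `τ' = j i^{k'}` for distinct letters `i ≠ j`. -/
def WordAdj (σ τ : Word) : Prop :=
  σ ≠ τ ∧ ∃ β σ' τ' : Word,
    σ = β ++ σ' ∧ τ = β ++ τ' ∧
    ((σ' = [] ∧ τ'.toFinset.card ≤ 2) ∨
     (τ' = [] ∧ σ'.toFinset.card ≤ 2) ∨
     (∃ (i j : Letter) (k k' : ℕ), i ≠ j ∧
        σ' = i :: List.replicate k j ∧ τ' = j :: List.replicate k' i))

/-- The graph `G_t`: vertices are the words of length at most `t` (all other words are
isolated), with adjacency `WordAdj`. -/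
def Gt (t : ℕ) : SimpleGraph Word where
  Adj σ τ := σ.length ≤ t ∧ τ.length ≤ t ∧ WordAdj σ τ
  symm := by
    constructor
    rintro σ τ ⟨h1, h2, hne, β, σ', τ', e1, e2, h3⟩
    refine ⟨h2, h1, hne.symm, β, τ', σ', e2, e1, ?_⟩
    rcases h3 with h | h | ⟨i, j, k, k', hij, hs, ht⟩
    · exact Or.inr (Or.inl h)
    · exact Or.inl h
    · exact Or.inr (Or.inr ⟨j, i, k', k, hij.symm, ht, hs⟩)
  loopless := ⟨fun σ h => h.2.2.1 rfl⟩

/-- `dW t σ τ` is the geodesic distance `d_t(σ,τ)` in the graph `G_t`. -/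
noncomputable def dW (t : ℕ) (σ τ : Word) : ℕ := (Gt t).dist σ τ

/-- Length of the longest suffix of `σ` using at most two distinct letters. -/
def suffLen (σ : Word) : ℕ :=
  Nat.findGreatest (fun m => (σ.drop (σ.length - m)).toFinset.card ≤ 2) σ.length

/-- `fW σ = τ₂` where `σ = τ₂τ₁` and `τ₁` is the longest suffix of `σ` using at most two
distinct letters; `fW [] = []`. -/
def fW (σ : Word) : Word := σ.take (σ.length - suffLen σ)

/-- `ω(σ)`: the least `n ≥ 0` with `f^[n] σ = ∅`. -/
noncomputable def omegaW (σ : Word) : ℕ := sInf {n : ℕ | fW^[n] σ = []}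

/-- `L(σ) = d_{|σ|}(σ, ∅) - 1` for nonempty `σ`, and `L(∅) = 0`. -/
noncomputable def Lw (σ : Word) : ℕ := if σ = [] then 0 else dW σ.length σ [] - 1

/-- `ᾱ_m`: the average of `L` over the `3^m` words of length `m`. -/
noncomputable def alphaBar (m : ℕ) : ℝ :=
  (∑ v : Fin m → Letter, (Lw (List.ofFn v) : ℝ)) / 3 ^ m

/-- `α* = sup_{m ≥ 1} ᾱ_m / m`. -/
noncomputable def alphaStar : ℝ :=
  sSup {x : ℝ | ∃ m : ℕ, 1 ≤ m ∧ x = alphaBar m / m}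

/-- `#V_t = (3^{t+1} - 1)/2`, the number of vertices of `G_t`, as a real number. -/
noncomputable def Nv (t : ℕ) : ℝ := ((3 : ℝ) ^ (t + 1) - 1) / 2

/-- The sum of `d_t(σ,τ)` over all ordered pairs of words `σ, τ ∈ V_t`
(twice the sum over unordered pairs of distinct words). -/
noncomputable def pairSum (t : ℕ) : ℝ :=
  ∑ k ∈ range (t + 1), ∑ l ∈ range (t + 1),
    ∑ v : Fin k → Letter, ∑ w : Fin l → Letter,
      (dW t (List.ofFn v) (List.ofFn w) : ℝ)

/-- The average path length `D̄(t)` of `G_t`. -/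
noncomputable def Dbar (t : ℕ) : ℝ := pairSum t / (Nv t * (Nv t - 1))

/-- `κ_t = (Σ_{σ ∈ V_t} L(σ)) / #V_t`. -/
noncomputable def kappa (t : ℕ) : ℝ :=
  (∑ k ∈ range (t + 1), ∑ v : Fin k → Letter, (Lw (List.ofFn v) : ℝ)) / Nv t

/-- `π_t`: the sum of `d_t(σ,τ)` over unordered pairs of distinct `σ, τ ∈ V_t`. -/
noncomputable def piT (t : ℕ) : ℝ := pairSum t / 2

/-- `μ_t`: the sum of `d_t(σ,τ)` over unordered pairs of distinct `σ, τ ∈ V_t`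
having the same first letter. -/
noncomputable def muT (t : ℕ) : ℝ :=
  (∑ i : Letter, ∑ k ∈ range t, ∑ l ∈ range t,
    ∑ v : Fin k → Letter, ∑ w : Fin l → Letter,
      (dW t (i :: List.ofFn v) (i :: List.ofFn w) : ℝ)) / 2

/-- `λ_t = Σ_{σ ∈ V_t, σ ≠ ∅} d_t(σ, ∅)`. -/
noncomputable def lambdaT (t : ℕ) : ℝ :=
  ∑ k ∈ Finset.Icc 1 t, ∑ v : Fin k → Letter, (dW t (List.ofFn v) [] : ℝ)

/-- `ν_t = Σ_{i<j} Σ_{|σ'|,|τ'| ≤ t-1} d_t(iσ', jτ')`. -/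
noncomputable def nuT (t : ℕ) : ℝ :=
  ∑ i : Letter, ∑ j : Letter,
    if i < j then
      ∑ k ∈ range t, ∑ l ∈ range t,
        ∑ v : Fin k → Letter, ∑ w : Fin l → Letter,
          (dW t (i :: List.ofFn v) (j :: List.ofFn w) : ℝ)
    else 0

/-- `IsNormalDecomp σ τs`: `τs = [τ₁, …, τ_l]` (with `l ≥ 1`) is a normal decomposition
of `σ`: `σ = τ₁⋯τ_l`; `#τ₁ ≤ 2`, `|τ₁| ≥ 1`; `#τ_i = 2`, `|τ_i| ≥ 2` for `i ≥ 2`; and for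
`i < l` the last letter of `τ_i` is the unique letter of the alphabet not appearing
in `τ_{i+1}`. -/
def IsNormalDecomp (σ : Word) (τs : List Word) : Prop :=
  σ = τs.flatten ∧ τs ≠ [] ∧
  (∀ i : Fin τs.length,
    (i.1 = 0 → 1 ≤ (τs.get i).length ∧ (τs.get i).toFinset.card ≤ 2) ∧
    (1 ≤ i.1 → 2 ≤ (τs.get i).length ∧ (τs.get i).toFinset.card = 2)) ∧
  (∀ i : ℕ, ∀ h : i + 1 < τs.length,
    ∃ c : Letter, (τs.get ⟨i, Nat.lt_of_succ_lt h⟩).getLast? = some c ∧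
      c ∉ (τs.get ⟨i + 1, h⟩).toFinset ∧
      ∀ c' : Letter, c' ∉ (τs.get ⟨i + 1, h⟩).toFinset → c' = c)

/-- `W_{k₁⋯k_l}`: the number of words of length `k₁ + ⋯ + k_l` admitting a normal
decomposition into blocks of lengths `k₁, …, k_l`. -/
noncomputable def Wcount (ks : List ℕ) : ℕ :=
  Nat.card {σ : Word // ∃ τs : List Word, IsNormalDecomp σ τs ∧ τs.map List.length = ks}

/-- `Ē(t) = 3^{-t} Σ_{q ≥ 1} Σ_{k₁ ≥ 1, k₂,…,k_q ≥ 2, k₁+⋯+k_q = t} (q-1)·W_{k₁⋯k_q}`. -/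
noncomputable def Ebar (t : ℕ) : ℝ :=
  ((∑ c : Composition t,
      if ∀ i ∈ c.blocks.tail, 2 ≤ i then
        (c.blocks.length - 1) * Wcount c.blocks
      else 0 : ℕ) : ℝ) / 3 ^ t
/-!
Call a word *two-letter* if it uses at most two distinct letters. `f` strips the longest
two-letter suffix, so `σ ~ f(σ)` and iterating `f` gives a path of length `ω(σ)` to `∅`.
Conversely, this greedy factorisation is optimal: `ω(σ) ≤ n` whenever `σ` is a product of `n`
two-letter words. Since every edge `βσ' ~ βτ'` has one endpoint a prefix of the other followed
by a two-letter word, and prefixes have no larger `ω`, `ω` changes by at most one along an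
edge, so every path from `σ` to `∅` has length at least `ω(σ)`.
-/

theorem SimpleGraph.Walk.le_length_add_of_adj {V : Type*} {G : SimpleGraph V} {φ : V → ℕ}
    (hφ : ∀ u v, G.Adj u v → φ u ≤ φ v + 1) {u v : V} (p : G.Walk u v) :
    φ u ≤ p.length + φ v := by
  induction p with
  | nil => simp
  | cons hadj _ ih =>
    rw [SimpleGraph.Walk.length_cons]
    have := hφ _ _ hadj
    omega

theorem card_toFinset_take_le {α : Type*} [DecidableEq α] (l : List α) (k : ℕ) :
    (l.take k).toFinset.card ≤ l.toFinset.card :=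
  Finset.card_le_card fun _ ha =>
    List.mem_toFinset.2 (List.mem_of_mem_take (List.mem_toFinset.1 ha))

theorem card_toFinset_cons_replicate_le_two {α : Type*} [DecidableEq α] (i j : α) (k : ℕ) :
    (i :: List.replicate k j).toFinset.card ≤ 2 := by
  refine (Finset.card_le_card fun x hx => ?_).trans (Finset.card_le_two (a := i) (b := j))
  simp only [List.mem_toFinset, List.mem_cons, List.mem_replicate] at hx
  rcases hx with rfl | ⟨-, rfl⟩ <;> simp

theorem one_le_suffLen {σ : Word} (h : σ ≠ []) : 1 ≤ suffLen σ := by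
  refine Nat.le_findGreatest (List.length_pos_iff.2 h) ?_
  calc (σ.drop (σ.length - 1)).toFinset.card ≤ (σ.drop (σ.length - 1)).length :=
        List.toFinset_card_le _
    _ ≤ 2 := by rw [List.length_drop]; omega

theorem card_toFinset_drop_suffLen_le_two (σ : Word) :
    (σ.drop (σ.length - suffLen σ)).toFinset.card ≤ 2 :=
  Nat.findGreatest_spec (P := fun m => (σ.drop (σ.length - m)).toFinset.card ≤ 2)
    (Nat.zero_le _) (by simp)

theorem fW_append_drop_suffLen (σ : Word) : fW σ ++ σ.drop (σ.length - suffLen σ) = σ :=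
  List.take_append_drop _ _

theorem length_fW_lt {σ : Word} (h : σ ≠ []) : (fW σ).length < σ.length := by
  have := one_le_suffLen h
  have := List.length_pos_iff.2 h
  rw [fW, List.length_take]
  omega

theorem omegaW_nil : omegaW [] = 0 := Nat.sInf_eq_zero.2 (Or.inl rfl)

theorem exists_iterate_fW_eq_nil (σ : Word) : ∃ n, fW^[n] σ = [] := by
  by_cases hσ : σ = []
  · exact ⟨0, hσ⟩
  · obtain ⟨n, hn⟩ := exists_iterate_fW_eq_nil (fW σ)
    exact ⟨n + 1, hn⟩
termination_by σ.length
decreasing_by exact length_fW_lt hσ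

theorem omegaW_eq_omegaW_fW_add_one {σ : Word} (h : σ ≠ []) :
    omegaW σ = omegaW (fW σ) + 1 := by
  have hpos : 1 ≤ omegaW σ := by
    refine le_csInf (exists_iterate_fW_eq_nil σ) fun n hn => ?_
    rcases n with _ | n
    · exact absurd hn h
    · omega
  exact (Nat.sInf_add hpos).symm

inductive TwoLetterSplit : ℕ → Word → Prop
  | nil (n : ℕ) : TwoLetterSplit n []
  | append {n : ℕ} {β ρ : Word} :
      TwoLetterSplit n β → ρ.toFinset.card ≤ 2 → TwoLetterSplit (n + 1) (β ++ ρ)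

theorem TwoLetterSplit.take {n : ℕ} {σ : Word} (h : TwoLetterSplit n σ) (k : ℕ) :
    TwoLetterSplit n (σ.take k) := by
  induction h generalizing k with
  | nil n => simpa using TwoLetterSplit.nil n
  | @append n β ρ _ hρ ih =>
    rw [List.take_append]
    exact (ih k).append ((card_toFinset_take_le ρ _).trans hρ)

theorem twoLetterSplit_omegaW (σ : Word) : TwoLetterSplit (omegaW σ) σ := by
  by_cases hσ : σ = []
  · exact hσ ▸ TwoLetterSplit.nil _
  · rw [omegaW_eq_omegaW_fW_add_one hσ]
    have h := (twoLetterSplit_omegaW (fW σ)).append (card_toFinset_drop_suffLen_le_two σ)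
    rwa [fW_append_drop_suffLen] at h
termination_by σ.length
decreasing_by exact length_fW_lt hσ

/-- Optimality of the greedy factorisation: `fW` strips a suffix at least as long as the last
factor of any two-letter factorisation, so `fW σ` is a prefix of the remaining factors. -/
theorem omegaW_le_of_twoLetterSplit {n : ℕ} {σ : Word} (h : TwoLetterSplit n σ) :
    omegaW σ ≤ n := by
  induction n generalizing σ with
  | zero => cases h; simp [omegaW_nil]
  | succ n ih =>
    by_cases hσ : σ = []
    · simp [hσ, omegaW_nil]
    cases h with
    | nil => exact absurd rfl hσ
    | @append _ β ρ hβ hρ =>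
      have hρ_le : ρ.length ≤ suffLen (β ++ ρ) := by
        refine Nat.le_findGreatest (by simp) ?_
        simpa [List.drop_append] using hρ
      have hfW : fW (β ++ ρ) = β.take ((β ++ ρ).length - suffLen (β ++ ρ)) :=
        List.take_append_of_le_length (by simp only [List.length_append]; omega)
      rw [omegaW_eq_omegaW_fW_add_one hσ, hfW]
      exact Nat.succ_le_succ (ih (hβ.take _))

theorem omegaW_append_le {β ρ : Word} (hρ : ρ.toFinset.card ≤ 2) :
    omegaW (β ++ ρ) ≤ omegaW β + 1 :=
  omegaW_le_of_twoLetterSplit ((twoLetterSplit_omegaW β).append hρ)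

theorem omegaW_le_of_isPrefix {β σ : Word} (h : β <+: σ) : omegaW β ≤ omegaW σ := by
  rw [List.prefix_iff_eq_take.1 h]
  exact omegaW_le_of_twoLetterSplit ((twoLetterSplit_omegaW σ).take _)

theorem omegaW_le_add_one_of_wordAdj {σ τ : Word} (h : WordAdj σ τ) :
    omegaW σ ≤ omegaW τ + 1 := by
  obtain ⟨-, β, σ', τ', rfl, rfl, hcase⟩ := h
  rcases hcase with ⟨rfl, -⟩ | ⟨rfl, hσ'⟩ | ⟨i, j, k, k', -, rfl, rfl⟩
  · rw [List.append_nil]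
    exact (omegaW_le_of_isPrefix (β.prefix_append τ')).trans (Nat.le_succ _)
  · rw [List.append_nil]
    exact omegaW_append_le hσ'
  · calc omegaW (β ++ i :: List.replicate k j)
        ≤ omegaW β + 1 := omegaW_append_le (card_toFinset_cons_replicate_le_two i j k)
      _ ≤ omegaW (β ++ j :: List.replicate k' i) + 1 :=
          Nat.succ_le_succ (omegaW_le_of_isPrefix (β.prefix_append _))

theorem Gt_adj_fW {t : ℕ} {σ : Word} (hσ : σ ≠ []) (ht : σ.length ≤ t) :
    (Gt t).Adj σ (fW σ) := by
  have hlt := length_fW_lt hσ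
  refine ⟨ht, hlt.le.trans ht, fun heq => hlt.ne (congrArg List.length heq).symm, fW σ, _, [],
    (fW_append_drop_suffLen σ).symm, (List.append_nil _).symm,
    Or.inr (Or.inl ⟨rfl, card_toFinset_drop_suffLen_le_two σ⟩)⟩

theorem exists_walk_nil_length_eq_omegaW {t : ℕ} {σ : Word} (ht : σ.length ≤ t) :
    ∃ p : (Gt t).Walk σ [], p.length = omegaW σ := by
  by_cases hσ : σ = []
  · subst hσ
    exact ⟨.nil, omegaW_nil.symm⟩
  · obtain ⟨p, hp⟩ := exists_walk_nil_length_eq_omegaW ((length_fW_lt hσ).le.trans ht)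
    exact ⟨.cons (Gt_adj_fW hσ ht) p, by
      rw [SimpleGraph.Walk.length_cons, hp, omegaW_eq_omegaW_fW_add_one hσ]⟩
termination_by σ.length
decreasing_by exact length_fW_lt hσ

/-- For every `t ≥ 0` and every word `σ` with `|σ| ≤ t`, the geodesic distance from `σ`
to the empty word in `G_t` equals `ω(σ)`. -/
theorem dist_to_empty_eq_omega (t : ℕ) (σ : Word) (h : σ.length ≤ t) :
    dW t σ [] = omegaW σ := by
  obtain ⟨p, hp⟩ := exists_walk_nil_length_eq_omegaW h
  obtain ⟨q, hq⟩ := p.reachable.exists_walk_length_eq_dist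
  have hlower := q.le_length_add_of_adj (φ := omegaW) fun _ _ (hadj : (Gt t).Adj _ _) =>
    omegaW_le_add_one_of_wordAdj hadj.2.2
  rw [omegaW_nil, add_zero, hq] at hlower
  exact le_antisymm (hp ▸ SimpleGraph.dist_le p) hlower
end

section
/- α* = 2/9, i.e. sup_{m≥1} ᾱ_m/m = lim_{m→∞} ᾱ_m/m = 2/9. -/
open Filter Finset

/-!
The distance `d_{|σ|}(σ, ∅)` is the number of blocks in the greedy left-to-right factorisation
of `σ` into blocks using at most two letters: removing a final block of at most two letters is
one edge, and no edge changes this block count by more than one. So `L(σ)` counts the cuts of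
the greedy factorisation. While a word is scanned, the open block uses one or two letters; a cut
occurs exactly when it uses two and the next letter is the third one. The resulting two-state
recursion for the total number of cuts gives `ᾱ_m = 2(m - 2)/9` for `m ≥ 2`, hence
`ᾱ_m / m = 2/9 - 4/(9m)`.
-/

open Topology

theorem csSup_eq_of_forall_le_of_tendsto {α : Type*} [ConditionallyCompleteLinearOrder α]
    [TopologicalSpace α] [OrderClosedTopology α] {f : ℕ → α} {c : α} {N : ℕ}
    (hle : ∀ m, N ≤ m → f m ≤ c) (hf : Tendsto f atTop (𝓝 c)) :
    sSup {x | ∃ m, N ≤ m ∧ x = f m} = c := by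
  have hub : c ∈ upperBounds {x | ∃ m, N ≤ m ∧ x = f m} := by
    rintro _ ⟨m, hm, rfl⟩
    exact hle m hm
  refine le_antisymm (csSup_le ⟨f N, N, le_rfl, rfl⟩ hub) (le_of_tendsto hf ?_)
  filter_upwards [eventually_ge_atTop N] with m hm
  exact le_csSup ⟨c, hub⟩ ⟨m, hm, rfl⟩

theorem sum_fin_succ_ofFn {α M : Type*} [Fintype α] [AddCommMonoid M] (n : ℕ)
    (f : List α → M) :
    ∑ v : Fin (n + 1) → α, f (List.ofFn v) =
      ∑ a : α, ∑ w : Fin n → α, f (a :: List.ofFn w) := by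
  rw [← Fintype.sum_prod_type']
  exact Fintype.sum_equiv (Fin.consEquiv fun _ => α).symm _ _
    (fun v => by rw [List.ofFn_succ]; rfl)

/-- Cuts made by the greedy factorisation into blocks of at most two letters, when the block
currently open uses the letters `s`. -/
def greedyCuts : Finset Letter → Word → ℕ
  | _, [] => 0
  | s, a :: l =>
    if (insert a s).card ≤ 2 then greedyCuts (insert a s) l else 1 + greedyCuts {a} l

def blockCount (σ : Word) : ℕ := if σ = [] then 0 else 1 + greedyCuts ∅ σ

theorem greedyCuts_le_append (γ μ : Word) (s : Finset Letter) :
    greedyCuts s γ ≤ greedyCuts s (γ ++ μ) := by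
  induction γ generalizing s with
  | nil => exact Nat.zero_le _
  | cons a l ih =>
    simp only [List.cons_append, greedyCuts]
    split_ifs
    · exact ih _
    · exact Nat.add_le_add_left (ih _) 1

theorem greedyCuts_eq_zero {T : Finset Letter} (hT : T.card ≤ 2) {σ : Word} {s : Finset Letter}
    (hs : s ⊆ T) (hσ : σ.toFinset ⊆ T) : greedyCuts s σ = 0 := by
  induction σ generalizing s with
  | nil => rfl
  | cons a l ih =>
    rw [List.toFinset_cons, Finset.insert_subset_iff] at hσ
    have hsub : insert a s ⊆ T := Finset.insert_subset hσ.1 hs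
    rw [greedyCuts, if_pos ((Finset.card_le_card hsub).trans hT)]
    exact ih hsub hσ.2

theorem greedyCuts_le_one {ρ : Word} (hρ : ρ.toFinset.card ≤ 2) (s : Finset Letter) :
    greedyCuts s ρ ≤ 1 := by
  induction ρ generalizing s with
  | nil => exact Nat.zero_le _
  | cons a l ih =>
    have hl : l.toFinset ⊆ (a :: l).toFinset := by simp
    rw [greedyCuts]
    split_ifs
    · exact ih ((Finset.card_le_card hl).trans hρ) _
    · rw [greedyCuts_eq_zero hρ (by simp) hl]

theorem greedyCuts_append_le (γ : Word) {ρ : Word} (hρ : ρ.toFinset.card ≤ 2)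
    (s : Finset Letter) : greedyCuts s (γ ++ ρ) ≤ greedyCuts s γ + 1 := by
  induction γ generalizing s with
  | nil => simpa [greedyCuts] using greedyCuts_le_one hρ s
  | cons a l ih =>
    simp only [List.cons_append, greedyCuts]
    split_ifs
    · exact ih _
    · exact (Nat.add_le_add_left (ih _) 1).trans_eq (Nat.add_assoc _ _ _).symm

theorem blockCount_le_append (β ρ : Word) : blockCount β ≤ blockCount (β ++ ρ) := by
  unfold blockCount
  split_ifs with hβ hβρ
  · exact le_rfl
  · exact Nat.zero_le _
  · simp_all
  · exact Nat.add_le_add_left (greedyCuts_le_append β ρ ∅) 1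

theorem blockCount_append_le (β : Word) {ρ : Word} (hρ : ρ.toFinset.card ≤ 2) :
    blockCount (β ++ ρ) ≤ blockCount β + 1 := by
  rcases eq_or_ne β [] with rfl | hβ
  · rw [List.nil_append, blockCount]
    split_ifs
    · exact Nat.zero_le _
    · rw [greedyCuts_eq_zero hρ (Finset.empty_subset _) subset_rfl]
      exact Nat.le_add_left _ _
  · rw [blockCount, blockCount, if_neg hβ, if_neg (by simp [hβ])]
    have := greedyCuts_append_le β hρ ∅
    omega

theorem toFinset_cons_replicate_card_le (i j : Letter) (k : ℕ) :
    (i :: List.replicate k j).toFinset.card ≤ 2 := by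
  have hsub : (i :: List.replicate k j).toFinset ⊆ {i, j} := by
    intro x hx
    simp only [List.toFinset_cons, Finset.mem_insert, List.mem_toFinset,
      List.mem_replicate] at hx
    rcases hx with rfl | ⟨-, rfl⟩ <;> simp
  exact (Finset.card_le_card hsub).trans Finset.card_le_two

theorem WordAdj.blockCount_le {σ τ : Word} (h : WordAdj σ τ) :
    blockCount σ ≤ blockCount τ + 1 := by
  obtain ⟨-, β, σ', τ', rfl, rfl, hc⟩ := h
  rcases hc with ⟨rfl, -⟩ | ⟨rfl, hσ'⟩ | ⟨i, j, k, k', -, rfl, rfl⟩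
  · rw [List.append_nil]
    exact (blockCount_le_append β τ').trans (Nat.le_succ _)
  · rw [List.append_nil]
    exact blockCount_append_le β hσ'
  · exact (blockCount_append_le β (toFinset_cons_replicate_card_le i j k)).trans
      (Nat.add_le_add_right (blockCount_le_append β _) 1)

theorem blockCount_le_add_length {t : ℕ} {σ τ : Word} (w : (Gt t).Walk σ τ) :
    blockCount σ ≤ blockCount τ + w.length := by
  induction w with
  | nil => exact le_rfl
  | cons h _ ih =>
    have := h.2.2.blockCount_le
    rw [SimpleGraph.Walk.length_cons]
    omega

theorem blockCount_le_edist (t : ℕ) (σ : Word) :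
    (blockCount σ : ℕ∞) ≤ (Gt t).edist σ [] := by
  rcases eq_or_ne ((Gt t).edist σ []) ⊤ with htop | htop
  · simp [htop]
  obtain ⟨w, hw⟩ := SimpleGraph.exists_walk_of_edist_ne_top htop
  rw [← hw]
  exact_mod_cast (blockCount_le_add_length w).trans_eq (zero_add _)

theorem edist_append_le_one {t : ℕ} (β : Word) {ρ : Word} (hρ : ρ.toFinset.card ≤ 2)
    (hlen : (β ++ ρ).length ≤ t) : (Gt t).edist (β ++ ρ) β ≤ 1 := by
  refine SimpleGraph.edist_le_one_iff_adj_or_eq.2 ?_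
  rcases eq_or_ne ρ [] with rfl | hρne
  · exact Or.inr (List.append_nil β)
  exact Or.inl ⟨hlen, le_trans (by simp) hlen, by simpa using hρne, β, ρ, [], rfl, by simp,
    Or.inr (Or.inl ⟨rfl, hρ⟩)⟩

/-- Here `ρ` is the open greedy block: deleting the greedy blocks of `ρ ++ σ` from the right,
one edge each, leads back to `β`. -/
theorem edist_append_le {t : ℕ} (σ : Word) {s : Finset Letter} (hs : s.card ≤ 2)
    {β ρ : Word} (hρ : ρ.toFinset ⊆ s) (hlen : (β ++ ρ ++ σ).length ≤ t) :
    (Gt t).edist (β ++ ρ ++ σ) β ≤ 1 + greedyCuts s σ := by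
  induction σ generalizing s β ρ with
  | nil =>
    rw [List.append_nil] at hlen ⊢
    exact (edist_append_le_one β ((Finset.card_le_card hρ).trans hs) hlen).trans le_self_add
  | cons a l ih =>
    rw [greedyCuts]
    split_ifs with has
    · have hρa : (ρ ++ [a]).toFinset ⊆ insert a s := by
        rw [List.toFinset_append, Finset.union_comm]
        simpa using Finset.insert_subset_insert a hρ
      simpa using ih has hρa (β := β) (by simpa using hlen)
    · have hβρ := edist_append_le_one β ((Finset.card_le_card hρ).trans hs)
        (t := t) (by simp at hlen ⊢; omega)
      have hrest := ih (s := {a}) (by simp) (β := β ++ ρ) (ρ := [a]) (by simp)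
        (by simpa using hlen)
      calc (Gt t).edist (β ++ ρ ++ a :: l) β
          ≤ (Gt t).edist (β ++ ρ ++ [a] ++ l) (β ++ ρ) + (Gt t).edist (β ++ ρ) β := by
            simpa using SimpleGraph.edist_triangle
        _ ≤ 1 + greedyCuts {a} l + 1 := add_le_add hrest hβρ
        _ = 1 + ↑(1 + greedyCuts {a} l) := by push_cast; ring

theorem dist_nil_eq_blockCount (σ : Word) : (Gt σ.length).dist σ [] = blockCount σ := by
  have hle : (Gt σ.length).edist σ [] ≤ blockCount σ := by
    rw [blockCount]
    split_ifs with hσ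
    · simp [hσ]
    · simpa using edist_append_le σ (Finset.card_empty.trans_le zero_le_two) (β := [])
        (ρ := []) (by simp) le_rfl
  have heq := le_antisymm hle (blockCount_le_edist σ.length σ)
  rw [SimpleGraph.dist, heq, ENat.toNat_natCast]

theorem Lw_eq_greedyCuts (σ : Word) : Lw σ = greedyCuts ∅ σ := by
  rw [Lw, dW, dist_nil_eq_blockCount, blockCount]
  split_ifs with hσ
  · rw [hσ]; rfl
  · omega

def cutSum (s : Finset Letter) (n : ℕ) : ℕ :=
  ∑ v : Fin n → Letter, greedyCuts s (List.ofFn v)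

theorem cutSum_zero (s : Finset Letter) : cutSum s 0 = 0 := by
  simp [cutSum, greedyCuts]

theorem cutSum_succ (s : Finset Letter) (n : ℕ) :
    cutSum s (n + 1) =
      ∑ a, if (insert a s).card ≤ 2 then cutSum (insert a s) n else 3 ^ n + cutSum {a} n := by
  rw [cutSum, sum_fin_succ_ofFn]
  refine Finset.sum_congr rfl fun a _ => ?_
  simp only [greedyCuts]
  split_ifs
  · rfl
  · simp [cutSum, Finset.sum_add_distrib]

theorem cutSum_succ_of_card_eq_one {s : Finset Letter} (hs : s.card = 1) (n : ℕ) :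
    cutSum s (n + 1) = cutSum s n + ∑ a ∈ sᶜ, cutSum (insert a s) n := by
  rw [cutSum_succ, ← Finset.sum_add_sum_compl s]
  congr 1
  · rw [Finset.sum_congr rfl fun a ha => by rw [Finset.insert_eq_of_mem ha, if_pos (by omega)],
      Finset.sum_const, hs, one_smul]
  · refine Finset.sum_congr rfl fun a ha => if_pos ?_
    rw [Finset.card_insert_of_notMem (Finset.mem_compl.1 ha), hs]

theorem cutSum_succ_of_card_eq_two {s : Finset Letter} (hs : s.card = 2) (n : ℕ) :
    cutSum s (n + 1) = 2 * cutSum s n + ∑ a ∈ sᶜ, (3 ^ n + cutSum {a} n) := by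
  rw [cutSum_succ, ← Finset.sum_add_sum_compl s]
  congr 1
  · rw [Finset.sum_congr rfl fun a ha => by rw [Finset.insert_eq_of_mem ha, if_pos (by omega)],
      Finset.sum_const, hs, smul_eq_mul]
  · refine Finset.sum_congr rfl fun a ha => if_neg ?_
    rw [Finset.card_insert_of_notMem (Finset.mem_compl.1 ha), hs]
    omega

theorem three_mul_cutSum_succ (n : ℕ) (s : Finset Letter) :
    (s.card = 1 → 3 * cutSum s (n + 1) = 2 * n * 3 ^ n) ∧
      (s.card = 2 → 3 * cutSum s (n + 1) = (2 * n + 3) * 3 ^ n) := by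
  have hcompl {s : Finset Letter} {k : ℕ} (hs : s.card = k) : sᶜ.card = 3 - k := by
    simp [Finset.card_compl, hs]
  induction n generalizing s with
  | zero =>
    refine ⟨fun hs => ?_, fun hs => ?_⟩
    · simp [cutSum_succ_of_card_eq_one hs, cutSum_zero]
    · simp [cutSum_succ_of_card_eq_two hs, cutSum_zero, hcompl hs]
  | succ n ih =>
    refine ⟨fun hs => ?_, fun hs => ?_⟩
    · have hstep : ∀ a ∈ sᶜ, 3 * cutSum (insert a s) (n + 1) = (2 * n + 3) * 3 ^ n :=
        fun a ha => (ih _).2 (by rw [Finset.card_insert_of_notMem (Finset.mem_compl.1 ha), hs])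
      rw [cutSum_succ_of_card_eq_one hs, mul_add, Finset.mul_sum, (ih s).1 hs,
        Finset.sum_congr rfl hstep, Finset.sum_const, hcompl hs, smul_eq_mul]
      ring
    · have hstep :
          ∀ a ∈ sᶜ, 3 * (3 ^ (n + 1) + cutSum {a} (n + 1)) = 3 ^ (n + 2) + 2 * n * 3 ^ n :=
        fun a _ => by rw [mul_add, (ih {a}).1 (Finset.card_singleton a)]; ring
      rw [cutSum_succ_of_card_eq_two hs, mul_add, Finset.mul_sum, mul_left_comm, (ih s).2 hs,
        Finset.sum_congr rfl hstep, Finset.sum_const, hcompl hs, smul_eq_mul]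
      ring

theorem nine_mul_sum_Lw (m : ℕ) :
    9 * ∑ v : Fin m → Letter, Lw (List.ofFn v) = 2 * (m - 2) * 3 ^ m := by
  simp only [Lw_eq_greedyCuts]
  cases m with
  | zero => simp [greedyCuts]
  | succ n =>
    have hfirst (a : Letter) :
        ∑ w : Fin n → Letter, greedyCuts ∅ (a :: List.ofFn w) = cutSum {a} n := by
      simp [greedyCuts, cutSum]
    rw [sum_fin_succ_ofFn]
    simp only [hfirst]
    cases n with
    | zero => simp [cutSum_zero]
    | succ k =>
      have hblock (a : Letter) : 9 * cutSum {a} (k + 1) = 3 * (2 * k * 3 ^ k) := by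
        rw [← (three_mul_cutSum_succ k {a}).1 (Finset.card_singleton a)]
        ring
      rw [Finset.mul_sum, Finset.sum_congr rfl fun a _ => hblock a, Finset.sum_const,
        Finset.card_univ, Fintype.card_fin, smul_eq_mul, show k + 1 + 1 - 2 = k by omega]
      ring

theorem alphaBar_eq (m : ℕ) : alphaBar m = 2 * ((m - 2 : ℕ) : ℝ) / 9 := by
  have h := congrArg (Nat.cast : ℕ → ℝ) (nine_mul_sum_Lw m)
  push_cast at h
  rw [alphaBar, div_eq_div_iff (by positivity) (by norm_num)]
  linarith

theorem alphaBar_div_le {m : ℕ} (hm : 1 ≤ m) : alphaBar m / m ≤ 2 / 9 := by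
  have hm0 : (0 : ℝ) < m := by exact_mod_cast hm
  have hsub : ((m - 2 : ℕ) : ℝ) ≤ m := by exact_mod_cast Nat.sub_le m 2
  rw [alphaBar_eq, div_le_iff₀ hm0]
  linarith

theorem tendsto_alphaBar_div :
    Tendsto (fun m : ℕ => alphaBar m / m) atTop (𝓝 (2 / 9)) := by
  have h : Tendsto (fun m : ℕ => (2 : ℝ) / 9 - 4 / 9 * (1 / m)) atTop (𝓝 (2 / 9)) := by
    simpa using tendsto_one_div_atTop_nhds_zero_nat.const_mul (4 / 9 : ℝ) |>.const_sub (2 / 9)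
  refine h.congr' ?_
  filter_upwards [eventually_ge_atTop 2] with m hm
  have hm0 : (m : ℝ) ≠ 0 := by positivity
  rw [alphaBar_eq, Nat.cast_sub hm]
  field_simp
  ring

/-- `α* = 2/9`, i.e. `sup_{m≥1} ᾱ_m/m = lim_{m→∞} ᾱ_m/m = 2/9`. -/
theorem alphaStar_eq_two_ninths :
    alphaStar = 2 / 9 ∧
    Tendsto (fun m : ℕ => alphaBar m / m) atTop (nhds (2 / 9)) :=
  ⟨csSup_eq_of_forall_le_of_tendsto (fun _ => alphaBar_div_le) tendsto_alphaBar_div,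
    tendsto_alphaBar_div⟩
end

section
/- Self-similarity of the geodesic distance: for t ≥ 1, any letter i ∈ {1,2,3}, and any words σ', τ' with |σ'|, |τ'| ≤ t−1, one has d_t(iσ', iτ') = d_{t−1}(σ', τ'). More generally, for any word β with |β| = k ≤ t and any words σ', τ' with |σ'|, |τ'| ≤ t−k, one has d_t(βσ', βτ') = d_{t−k}(σ', τ'). -/
open Filter Finset

/-!
Prepending `β` embeds `G_{t-|β|}` into `G_t` as a full subgraph, since adjacency only looks past
the longest common prefix; this gives `d_t(βσ', βτ') ≤ d_{t-|β|}(σ', τ')`. Conversely, the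
retraction of `G_t` that strips the prefix `β` and collapses every word not extending `β` to `∅`
sends adjacent words to adjacent or equal words: an edge leaving the words extending `β = β''δ`
branches off at a proper prefix `β''`, so past that prefix its endpoint `β''δρ` reads `δρ`, a word
on at most two letters; hence `ρ` is `∅` or adjacent to `∅`. Such a map does not
increase distances, which gives the reverse inequality.
-/

namespace SimpleGraph

variable {V W : Type*} {G : SimpleGraph V} {G' : SimpleGraph W}

theorem Walk.exists_length_le_of_adj_or_eq (f : V → W)
    (hf : ∀ ⦃a b⦄, G.Adj a b → G'.Adj (f a) (f b) ∨ f a = f b) {u v : V} (p : G.Walk u v) :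
    ∃ q : G'.Walk (f u) (f v), q.length ≤ p.length := by
  induction p with
  | nil => exact ⟨.nil, le_rfl⟩
  | cons h _ ih =>
    obtain ⟨q, hq⟩ := ih
    rcases hf h with h' | h'
    · exact ⟨.cons h' q, by simpa using hq⟩
    · exact ⟨q.copy h'.symm rfl, by simp only [Walk.length_copy, Walk.length_cons]; omega⟩

theorem dist_le_dist_of_adj_or_eq (f : V → W)
    (hf : ∀ ⦃a b⦄, G.Adj a b → G'.Adj (f a) (f b) ∨ f a = f b) {u v : V}
    (h : G.Reachable u v) : G'.dist (f u) (f v) ≤ G.dist u v := by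
  obtain ⟨p, hp⟩ := h.exists_walk_length_eq_dist
  obtain ⟨q, hq⟩ := p.exists_length_le_of_adj_or_eq f hf
  exact hp ▸ (dist_le q).trans hq

end SimpleGraph

theorem wordAdj_append_left_iff (β σ τ : Word) :
    WordAdj (β ++ σ) (β ++ τ) ↔ WordAdj σ τ := by
  constructor
  · rintro ⟨hne, γ, σ', τ', hσ, hτ, hc⟩
    refine ⟨fun h => hne (h ▸ rfl), ?_⟩
    rcases List.prefix_or_prefix_of_prefix (List.prefix_append β σ) ⟨σ', hσ.symm⟩ with
      ⟨δ, rfl⟩ | ⟨δ, rfl⟩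
    · rw [List.append_assoc] at hσ hτ
      exact ⟨δ, σ', τ', List.append_cancel_left hσ, List.append_cancel_left hτ, hc⟩
    · rw [List.append_assoc] at hσ hτ
      have hσ' := List.append_cancel_left hσ
      have hτ' := List.append_cancel_left hτ
      rcases δ with _ | ⟨d, δ⟩
      · exact ⟨[], σ', τ', hσ', hτ', hc⟩
      · -- both remainders start with `d`, which rules out all three shapes of an edge
        rcases hc with ⟨rfl, -⟩ | ⟨rfl, -⟩ | ⟨i, j, k, k', hij, rfl, rfl⟩
        · simp at hσ'
        · simp at hτ'
        · simp only [List.cons_append, List.cons.injEq] at hσ' hτ'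
          exact absurd (hσ'.1.symm.trans hτ'.1) hij
  · rintro ⟨hne, γ, σ', τ', rfl, rfl, hc⟩
    exact ⟨fun h => hne (List.append_cancel_left h), β ++ γ, σ', τ',
      (List.append_assoc _ _ _).symm, (List.append_assoc _ _ _).symm, hc⟩

theorem wordAdj_nil_of_card_toFinset_le_two {ρ : Word} (hρ : ρ ≠ [])
    (hc : ρ.toFinset.card ≤ 2) : WordAdj ρ [] :=
  ⟨hρ, [], ρ, [], rfl, rfl, Or.inr (Or.inl ⟨rfl, hc⟩)⟩

theorem card_toFinset_le_two_of_wordAdj {β ρ τ : Word} (h : WordAdj (β ++ ρ) τ)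
    (hτ : ¬β <+: τ) : ρ.toFinset.card ≤ 2 := by
  obtain ⟨-, γ, σ', τ', hσ, rfl, hc⟩ := h
  obtain ⟨δ, rfl⟩ : γ <+: β := by
    rcases List.prefix_or_prefix_of_prefix (List.prefix_append β ρ) ⟨σ', hσ.symm⟩ with h | h
    · exact absurd (h.trans (List.prefix_append γ τ')) hτ
    · exact h
  have hδ : δ ≠ [] := by
    rintro rfl
    exact hτ (by simp)
  rw [List.append_assoc] at hσ
  obtain rfl := (List.append_cancel_left hσ).symm
  have hσ' : (δ ++ ρ).toFinset.card ≤ 2 := by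
    rcases hc with ⟨h0, -⟩ | ⟨-, h0⟩ | ⟨i, j, k, -, -, hij, -⟩
    · simp [hδ] at h0
    · exact h0
    · rw [hij]
      refine (Finset.card_le_card (t := {i, j}) fun x hx => ?_).trans Finset.card_le_two
      simp only [List.mem_toFinset, List.mem_cons, List.mem_replicate] at hx
      rcases hx with rfl | ⟨-, rfl⟩ <;> simp
  refine (Finset.card_le_card fun x hx => ?_).trans hσ'
  simp only [List.mem_toFinset, List.mem_append] at hx ⊢
  exact .inr hx

theorem Gt_adj_append_left_iff {t : ℕ} {β : Word} (hβ : β.length ≤ t) (σ τ : Word) :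
    (Gt t).Adj (β ++ σ) (β ++ τ) ↔ (Gt (t - β.length)).Adj σ τ := by
  simp only [Gt, List.length_append, wordAdj_append_left_iff]
  exact and_congr (by omega) (and_congr (by omega) Iff.rfl)

theorem Gt_reachable_nil {t : ℕ} {σ : Word} (hσ : σ.length ≤ t) : (Gt t).Reachable σ [] := by
  induction σ using List.reverseRecOn with
  | nil => rfl
  | append_singleton σ a ih =>
    simp only [List.length_append, List.length_singleton] at hσ
    have hadj : (Gt t).Adj (σ ++ [a]) (σ ++ []) :=
      (Gt_adj_append_left_iff (by omega) _ _).2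
        ⟨by simp; omega, by simp, wordAdj_nil_of_card_toFinset_le_two (by simp) (by simp)⟩
    exact (List.append_nil σ ▸ hadj).reachable.trans (ih (by omega))

theorem Gt_reachable {t : ℕ} {σ τ : Word} (hσ : σ.length ≤ t) (hτ : τ.length ≤ t) :
    (Gt t).Reachable σ τ :=
  (Gt_reachable_nil hσ).trans (Gt_reachable_nil hτ).symm

def stripPrefix (β σ : Word) : Word := if β <+: σ then σ.drop β.length else []

@[simp]
theorem stripPrefix_append (β σ : Word) : stripPrefix β (β ++ σ) = σ := by
  simp [stripPrefix]

theorem stripPrefix_of_not_prefix {β σ : Word} (h : ¬β <+: σ) : stripPrefix β σ = [] :=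
  if_neg h

theorem Gt_adj_stripPrefix {t : ℕ} {β : Word} (hβ : β.length ≤ t) {σ τ : Word}
    (h : (Gt t).Adj σ τ) :
    (Gt (t - β.length)).Adj (stripPrefix β σ) (stripPrefix β τ) ∨
      stripPrefix β σ = stripPrefix β τ := by
  wlog hσ : β <+: σ generalizing σ τ
  · by_cases hτ : β <+: τ
    · exact (this h.symm hτ).imp SimpleGraph.Adj.symm Eq.symm
    · exact .inr (by rw [stripPrefix_of_not_prefix hσ, stripPrefix_of_not_prefix hτ])
  obtain ⟨ρ, rfl⟩ := hσ
  by_cases hτ : β <+: τ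
  · obtain ⟨τ, rfl⟩ := hτ
    simpa using Or.inl ((Gt_adj_append_left_iff hβ ρ τ).1 h)
  rcases eq_or_ne ρ [] with rfl | hρ
  · exact .inr (by rw [stripPrefix_append, stripPrefix_of_not_prefix hτ])
  · left
    rw [stripPrefix_append, stripPrefix_of_not_prefix hτ]
    have hlen : β.length + ρ.length ≤ t := by simpa using h.1
    exact ⟨by omega, by simp,
      wordAdj_nil_of_card_toFinset_le_two hρ (card_toFinset_le_two_of_wordAdj h.2.2 hτ)⟩

theorem dW_append_left {t : ℕ} {β σ τ : Word} (hβ : β.length ≤ t)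
    (hσ : σ.length ≤ t - β.length) (hτ : τ.length ≤ t - β.length) :
    dW t (β ++ σ) (β ++ τ) = dW (t - β.length) σ τ := by
  apply le_antisymm
  · exact SimpleGraph.dist_le_dist_of_adj_or_eq (β ++ ·)
      (fun _ _ h => .inl ((Gt_adj_append_left_iff hβ _ _).2 h)) (Gt_reachable hσ hτ)
  · have hreach : (Gt t).Reachable (β ++ σ) (β ++ τ) :=
      Gt_reachable (by simp only [List.length_append]; omega)
        (by simp only [List.length_append]; omega)
    simpa only [dW, stripPrefix_append] using
      SimpleGraph.dist_le_dist_of_adj_or_eq (stripPrefix β)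
        (fun _ _ h => Gt_adj_stripPrefix hβ h) hreach

/-- Self-similarity of the geodesic distance: for `t ≥ 1`, letters `i`, and words of length
at most `t-1`, `d_t(iσ', iτ') = d_{t-1}(σ', τ')`; more generally, prepending a common prefix
`β` of length `k ≤ t` gives `d_t(βσ', βτ') = d_{t-k}(σ', τ')`. -/
theorem dist_self_similar :
    (∀ t : ℕ, 1 ≤ t → ∀ i : Letter, ∀ σ' τ' : Word,
      σ'.length ≤ t - 1 → τ'.length ≤ t - 1 →
      dW t (i :: σ') (i :: τ') = dW (t - 1) σ' τ') ∧
    (∀ t : ℕ, ∀ β σ' τ' : Word, β.length ≤ t →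
      σ'.length ≤ t - β.length → τ'.length ≤ t - β.length →
      dW t (β ++ σ') (β ++ τ') = dW (t - β.length) σ' τ') :=
  ⟨fun _ ht i _ _ hσ hτ => dW_append_left (β := [i]) ht hσ hτ,
    fun _ _ _ _ hβ hσ hτ => dW_append_left hβ hσ hτ⟩
end

section
/- For any nonempty words τ and σ, one has L(τ) + L(σ) ≤ L(τσ) ≤ L(τ) + L(σ) + 1, where τσ denotes the concatenation of τ and σ. -/
open Filter Finset

/-!
For `|σ| ≤ t`, `d_t(σ, ∅)` is the least number of pieces in a factorization of `σ` into
words using at most two letters: deleting a nonempty two-letter suffix is an edge of `G_t`,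
and across any edge this count changes by at most one. Hence `L = minPieces - 1`. The count
is subadditive under concatenation, and cutting an optimal factorization of `τσ` at the
junction splits at most one piece, which gives the two bounds.
-/

section MinPieces

variable {α : Type*} [DecidableEq α]

def TwoLetter (w : List α) : Prop := w.toFinset.card ≤ 2

theorem TwoLetter.mono {v w : List α} (hvw : v ⊆ w) (hw : TwoLetter w) : TwoLetter v :=
  (Finset.card_le_card fun x hx => by simpa using hvw (List.mem_toFinset.mp hx)).trans hw

theorem twoLetter_of_forall_mem {i j : α} {w : List α} (h : ∀ x ∈ w, x = i ∨ x = j) :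
    TwoLetter w :=
  (Finset.card_le_card fun x hx => by
    simpa using h x (List.mem_toFinset.mp hx)).trans Finset.card_le_two

def IsTwoLetterPartition (σ : List α) (ps : List (List α)) : Prop :=
  ps.flatten = σ ∧ ∀ p ∈ ps, TwoLetter p

theorem isTwoLetterPartition_singletons (σ : List α) :
    IsTwoLetterPartition σ (σ.map fun a => [a]) :=
  ⟨by induction σ <;> simp_all, by simp [TwoLetter]⟩

theorem IsTwoLetterPartition.append {u v : List α} {ps qs : List (List α)}
    (hps : IsTwoLetterPartition u ps) (hqs : IsTwoLetterPartition v qs) :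
    IsTwoLetterPartition (u ++ v) (ps ++ qs) := by
  refine ⟨by simp [hps.1, hqs.1], fun p hp => ?_⟩
  rcases List.mem_append.mp hp with h | h
  exacts [hps.2 p h, hqs.2 p h]

theorem IsTwoLetterPartition.split : ∀ {ps : List (List α)} {u v : List α},
    IsTwoLetterPartition (u ++ v) ps →
    ∃ qs rs, IsTwoLetterPartition u qs ∧ IsTwoLetterPartition v rs ∧
      qs.length + rs.length ≤ ps.length + 1
  | [], u, v, ⟨hflat, _⟩ => by
    obtain ⟨rfl, rfl⟩ := List.append_eq_nil_iff.mp hflat.symm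
    exact ⟨[], [], ⟨rfl, by simp⟩, ⟨rfl, by simp⟩, by simp⟩
  | p :: ps, u, v, ⟨hflat, htwo⟩ => by
    have htwo_p : TwoLetter p := htwo p List.mem_cons_self
    have htwo_ps : ∀ q ∈ ps, TwoLetter q := fun q hq => htwo q (List.mem_cons_of_mem p hq)
    rcases List.append_eq_append_iff.mp (List.flatten_cons ▸ hflat) with
      ⟨γ, rfl, hrest⟩ | ⟨γ, rfl, rfl⟩
    · obtain ⟨qs, rs, hqs, hrs, hlen⟩ := split ⟨hrest, htwo_ps⟩
      refine ⟨p :: qs, rs, ?_, hrs, by simp; omega⟩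
      simpa using IsTwoLetterPartition.append (ps := [p]) ⟨by simp, by simpa using htwo_p⟩ hqs
    · refine ⟨[u], γ :: ps, ⟨by simp, ?_⟩, ⟨by simp, ?_⟩, by simp; omega⟩
      · simpa using htwo_p.mono (List.subset_append_left _ _)
      · simpa using ⟨htwo_p.mono (List.subset_append_right _ _), htwo_ps⟩

noncomputable def minPieces (σ : List α) : ℕ :=
  sInf {n | ∃ ps, IsTwoLetterPartition σ ps ∧ ps.length = n}

theorem exists_isTwoLetterPartition_length_eq_minPieces (σ : List α) :
    ∃ ps, IsTwoLetterPartition σ ps ∧ ps.length = minPieces σ :=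
  Nat.sInf_mem (s := {n | ∃ ps, IsTwoLetterPartition σ ps ∧ ps.length = n})
    ⟨_, _, isTwoLetterPartition_singletons σ, rfl⟩

theorem minPieces_le {σ : List α} {ps : List (List α)} (h : IsTwoLetterPartition σ ps) :
    minPieces σ ≤ ps.length :=
  Nat.sInf_le ⟨ps, h, rfl⟩

@[simp]
theorem minPieces_nil : minPieces ([] : List α) = 0 :=
  Nat.le_zero.mp (minPieces_le (σ := []) (ps := []) ⟨rfl, by simp⟩)

theorem minPieces_pos {σ : List α} (hσ : σ ≠ []) : 0 < minPieces σ := by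
  obtain ⟨ps, ⟨hflat, -⟩, hlen⟩ := exists_isTwoLetterPartition_length_eq_minPieces σ
  rw [← hlen, List.length_pos_iff]
  rintro rfl
  exact hσ hflat.symm

theorem minPieces_le_one {σ : List α} (h : TwoLetter σ) : minPieces σ ≤ 1 :=
  minPieces_le (ps := [σ]) ⟨by simp, by simpa using h⟩

theorem minPieces_append_le (u v : List α) :
    minPieces (u ++ v) ≤ minPieces u + minPieces v := by
  obtain ⟨ps, hps, hpl⟩ := exists_isTwoLetterPartition_length_eq_minPieces u
  obtain ⟨qs, hqs, hql⟩ := exists_isTwoLetterPartition_length_eq_minPieces v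
  simpa [hpl, hql] using minPieces_le (hps.append hqs)

theorem minPieces_add_minPieces_le (u v : List α) :
    minPieces u + minPieces v ≤ minPieces (u ++ v) + 1 := by
  obtain ⟨ps, hps, hpl⟩ := exists_isTwoLetterPartition_length_eq_minPieces (u ++ v)
  obtain ⟨qs, rs, hqs, hrs, hlen⟩ := hps.split
  have := minPieces_le hqs
  have := minPieces_le hrs
  omega

theorem minPieces_le_append (u v : List α) : minPieces u ≤ minPieces (u ++ v) := by
  rcases eq_or_ne v [] with rfl | hv
  · simp
  have := minPieces_pos hv
  have := minPieces_add_minPieces_le u v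
  omega

end MinPieces

theorem minPieces_le_of_wordAdj {σ τ : Word} (h : WordAdj σ τ) :
    minPieces τ ≤ minPieces σ + 1 := by
  obtain ⟨-, β, σ', τ', rfl, rfl, hcase⟩ := h
  rcases hcase with ⟨rfl, hτ'⟩ | ⟨rfl, -⟩ | ⟨i, j, k, k', -, rfl, rfl⟩
  · have := minPieces_le_one hτ'
    have := minPieces_append_le β τ'
    simp only [List.append_nil]
    omega
  · simpa using (minPieces_le_append β σ').trans (Nat.le_succ _)
  · have htwo : TwoLetter (j :: List.replicate k' i) :=
      twoLetter_of_forall_mem fun x hx => by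
        rcases List.mem_cons.mp hx with rfl | hx
        exacts [Or.inr rfl, Or.inl (List.eq_of_mem_replicate hx)]
    have := minPieces_le_one htwo
    have := minPieces_append_le β (j :: List.replicate k' i)
    have := minPieces_le_append β (i :: List.replicate k j)
    omega

theorem minPieces_le_add_length {t : ℕ} {σ τ : Word} (w : (Gt t).Walk σ τ) :
    minPieces σ ≤ minPieces τ + w.length := by
  induction w with
  | nil => simp
  | cons h _ ih =>
    have := minPieces_le_of_wordAdj ((Gt t).adj_symm h).2.2
    rw [SimpleGraph.Walk.length_cons]
    omega

theorem gt_adj_append_twoLetter {t : ℕ} {β p : Word} (hp : TwoLetter p) (hp₀ : p ≠ [])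
    (hlen : (β ++ p).length ≤ t) : (Gt t).Adj (β ++ p) β := by
  refine ⟨hlen, by simp at hlen; omega, ?_, β, p, [], rfl, by simp, Or.inr (Or.inl ⟨rfl, hp⟩)⟩
  simpa using hp₀

theorem exists_walk_nil_length_le {t : ℕ} (ps : List Word) (htwo : ∀ p ∈ ps, TwoLetter p)
    (hlen : ps.flatten.length ≤ t) : ∃ w : (Gt t).Walk ps.flatten [], w.length ≤ ps.length := by
  induction ps using List.reverseRecOn with
  | nil => exact ⟨.nil, le_rfl⟩
  | append_singleton qs p ih =>
    rw [List.flatten_concat] at hlen ⊢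
    rw [List.length_append] at hlen
    obtain ⟨w, hw⟩ := ih (fun q hq => htwo q (by simp [hq])) (by omega)
    rcases eq_or_ne p [] with rfl | hp
    · rw [List.append_nil]
      exact ⟨w, hw.trans (by simp)⟩
    · have hadj := gt_adj_append_twoLetter (t := t) (β := qs.flatten) (htwo p (by simp)) hp
        (by rwa [List.length_append])
      exact ⟨.cons hadj w, by simp; omega⟩

theorem gt_dist_nil_eq_minPieces {t : ℕ} {σ : Word} (h : σ.length ≤ t) :
    (Gt t).dist σ [] = minPieces σ := by
  obtain ⟨ps, ⟨rfl, htwo⟩, hps⟩ := exists_isTwoLetterPartition_length_eq_minPieces σ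
  obtain ⟨w, hw⟩ := exists_walk_nil_length_le ps htwo h
  have hreach : (Gt t).Reachable ps.flatten [] := ⟨w⟩
  obtain ⟨w', hw'⟩ := hreach.exists_walk_length_eq_dist
  have hlower := minPieces_le_add_length w'
  rw [minPieces_nil, hw'] at hlower
  have hupper := SimpleGraph.dist_le w
  omega

theorem Lw_eq_minPieces_sub_one (σ : Word) : Lw σ = minPieces σ - 1 := by
  rcases eq_or_ne σ [] with rfl | hσ
  · simp [Lw]
  · rw [Lw, if_neg hσ, dW, gt_dist_nil_eq_minPieces le_rfl]

/-- For any nonempty words `τ` and `σ`, `L(τ) + L(σ) ≤ L(τσ) ≤ L(τ) + L(σ) + 1`. -/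
theorem L_concat_bounds (τ σ : Word) (hτ : τ ≠ []) (hσ : σ ≠ []) :
    Lw τ + Lw σ ≤ Lw (τ ++ σ) ∧ Lw (τ ++ σ) ≤ Lw τ + Lw σ + 1 := by
  simp only [Lw_eq_minPieces_sub_one]
  have := minPieces_pos hτ
  have := minPieces_pos hσ
  have := minPieces_append_le τ σ
  have := minPieces_add_minPieces_le τ σ
  omega
end

section
/- Let σ and τ be nonempty words such that f(σ) is a (not necessarily proper) prefix of f(τ) and f(τ) is a (not necessarily proper) prefix of σ. Then for every k ≥ 1, f^k(σ) is a prefix of f^k(τ) and f^k(τ) is a prefix of f^{k−1}(σ). Consequently |ω(σ) − ω(τ)| ≤ 1. -/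
open Filter Finset

/-! `f` only cuts a word at the start of its longest suffix with at most two letters, and that
cut point can only move right when the word is extended, so `f` is monotone for the prefix
order. Iterating the two hypotheses then interleaves the orbits of `σ` and `τ`, and `ω` reads
off the first index at which an orbit reaches `∅`. -/

lemma length_fW (σ : Word) : (fW σ).length = σ.length - suffLen σ := by
  rw [fW, List.length_take, min_eq_left (Nat.sub_le _ _)]

lemma fW_prefix (σ : Word) : fW σ <+: σ := List.take_prefix _ _

lemma length_fW_le_iff {σ : Word} {n : ℕ} :
    (fW σ).length ≤ n ↔ (σ.drop n).toFinset.card ≤ 2 := by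
  constructor
  · intro hn
    have hspec : (σ.drop (σ.length - suffLen σ)).toFinset.card ≤ 2 :=
      Nat.findGreatest_spec
        (P := fun m => (σ.drop (σ.length - m)).toFinset.card ≤ 2) (Nat.zero_le _) (by simp)
    rw [← length_fW] at hspec
    refine le_trans (Finset.card_le_card fun x hx => ?_) hspec
    simp only [List.mem_toFinset] at hx ⊢
    exact (List.drop_suffix_drop_left σ hn).subset hx
  · intro hcard
    rcases le_or_gt σ.length n with hn | hn
    · exact (length_fW σ ▸ Nat.sub_le _ _).trans hn
    · have : σ.length - n ≤ suffLen σ :=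
        Nat.le_findGreatest (Nat.sub_le _ _) (by rwa [Nat.sub_sub_self hn.le])
      rw [length_fW]
      omega

lemma length_fW_le (σ : Word) : (fW σ).length ≤ σ.length - 1 := by
  refine length_fW_le_iff.2 ((List.toFinset_card_le _).trans ?_)
  rw [List.length_drop]
  omega

lemma fW_mono {α β : Word} (h : α <+: β) : fW α <+: fW β := by
  refine List.prefix_of_prefix_length_le ((fW_prefix α).trans h) (fW_prefix β) ?_
  refine length_fW_le_iff.2 (le_trans (Finset.card_le_card fun x hx => ?_)
    ((length_fW_le_iff (σ := β)).1 le_rfl))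
  simp only [List.mem_toFinset] at hx ⊢
  exact (h.drop _).subset hx

lemma fW_iterate_mono {α β : Word} (h : α <+: β) (k : ℕ) : fW^[k] α <+: fW^[k] β := by
  induction k with
  | zero => exact h
  | succ k ih =>
    rw [Function.iterate_succ_apply', Function.iterate_succ_apply']
    exact fW_mono ih

lemma length_fW_iterate_le (σ : Word) (n : ℕ) : (fW^[n] σ).length ≤ σ.length - n := by
  induction n with
  | zero => simp
  | succ n ih =>
    rw [Function.iterate_succ_apply']
    have := length_fW_le (fW^[n] σ)
    omega

lemma fW_iterate_eq_nil_iff {σ : Word} {n : ℕ} : fW^[n] σ = [] ↔ omegaW σ ≤ n := by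
  have hω : fW^[omegaW σ] σ = [] :=
    Nat.sInf_mem (s := {n | fW^[n] σ = []}) ⟨σ.length, List.eq_nil_of_length_eq_zero
      (Nat.le_zero.1 ((length_fW_iterate_le σ _).trans (Nat.sub_self _).le))⟩
  refine ⟨fun h => Nat.sInf_le h, fun h => ?_⟩
  rw [← Nat.sub_add_cancel h, Function.iterate_add_apply, hω]
  exact Function.iterate_fixed rfl _

theorem f_iterate_prefix_general (σ τ : Word)
    (h1 : fW σ <+: fW τ) (h2 : fW τ <+: σ) :
    (∀ k : ℕ, 1 ≤ k → (fW^[k] σ <+: fW^[k] τ) ∧ (fW^[k] τ <+: fW^[k - 1] σ)) ∧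
    |(omegaW σ : ℤ) - (omegaW τ : ℤ)| ≤ 1 := by
  have interleave : ∀ k : ℕ, (fW^[k + 1] σ <+: fW^[k + 1] τ) ∧ (fW^[k + 1] τ <+: fW^[k] σ) :=
    fun k => ⟨fW_iterate_mono h1 k, fW_iterate_mono h2 k⟩
  refine ⟨fun k hk => ?_, ?_⟩
  · obtain ⟨m, rfl⟩ := Nat.exists_eq_add_of_le' hk
    simpa using interleave m
  · have hστ : omegaW σ ≤ omegaW τ + 1 := by
      have hτ : fW^[omegaW τ + 1] τ = [] := fW_iterate_eq_nil_iff.2 (Nat.le_succ _)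
      exact fW_iterate_eq_nil_iff.1 (List.prefix_nil.1 (hτ ▸ (interleave (omegaW τ)).1))
    have hτσ : omegaW τ ≤ omegaW σ + 1 := by
      have hσ : fW^[omegaW σ] σ = [] := fW_iterate_eq_nil_iff.2 le_rfl
      exact fW_iterate_eq_nil_iff.1 (List.prefix_nil.1 (hσ ▸ (interleave (omegaW σ)).2))
    rw [abs_sub_le_iff]
    omega

/-- If `σ, τ` are nonempty words with `f(σ)` a prefix of `f(τ)` and `f(τ)` a prefix of `σ`,
then for every `k ≥ 1`, `f^k(σ)` is a prefix of `f^k(τ)` and `f^k(τ)` is a prefix of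
`f^{k-1}(σ)`; consequently `|ω(σ) − ω(τ)| ≤ 1`. -/
theorem f_iterate_prefix (σ τ : Word) (hσ : σ ≠ []) (hτ : τ ≠ [])
    (h1 : fW σ <+: fW τ) (h2 : fW τ <+: σ) :
    (∀ k : ℕ, 1 ≤ k → (fW^[k] σ <+: fW^[k] τ) ∧ (fW^[k] τ <+: fW^[k - 1] σ)) ∧
    |(omegaW σ : ℤ) - (omegaW τ : ℤ)| ≤ 1 :=
  f_iterate_prefix_general σ τ h1 h2
end

section
/- For distinct letters i ≠ j in {1,2,3}, any t ≥ 1, and any words σ, τ with |σ|, |τ| ≤ t−1, one has L(σ) + L(τ) ≤ d_t(iσ, jτ) ≤ L(σ) + L(τ) + 3. -/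
open Filter Finset

/-!
Upper bound: prepending a letter embeds `G_{|σ|}` into `G_t`, so `iσ` lies within `L(σ) + 1`
of `i`, `jτ` within `L(τ) + 1` of `j`, and `i ~ j`.

Lower bound: for `π = cπ'` let `P_c^m(π) = d_m(π'', ∅) - 1`, where `π''` is `π'` truncated to
length `m`, and let `P_c^m` vanish on words not starting with `c`. Truncation sends edges to
edges or loops, so `P_c^m` changes by at most one along an edge of `G_t`; and an edge between
words with different first letters joins words whose tails use at most two letters, where
every `P_c^m` vanishes. Hence `P_i^{|σ|} - P_j^{|τ|}` changes by at most one along each edge,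
while it equals `L(σ)` at `iσ` and `-L(τ)` at `jτ`.
-/

open SimpleGraph

lemma List.card_toFinset_mono {α : Type*} [DecidableEq α] {l l' : List α} (h : l ⊆ l') :
    l.toFinset.card ≤ l'.toFinset.card :=
  Finset.card_le_card fun _ hx => List.mem_toFinset.2 (h (List.mem_toFinset.1 hx))

namespace SimpleGraph

variable {V W : Type*} {G : SimpleGraph V} {G' : SimpleGraph W}

lemma Reachable.dist_map_le (f : G →g G') {u v : V} (h : G.Reachable u v) :
    G'.dist (f u) (f v) ≤ G.dist u v := by
  obtain ⟨p, hp⟩ := h.exists_walk_length_eq_dist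
  rw [← hp, ← p.length_map f]
  exact dist_le _

lemma Walk.le_add_length_of_adj {f : V → ℤ} (hf : ∀ x y, G.Adj x y → f x ≤ f y + 1)
    {u v : V} (p : G.Walk u v) : f u ≤ f v + p.length := by
  induction p with
  | nil => simp
  | cons h _ ih => have := hf _ _ h; push_cast [Walk.length_cons]; omega

lemma Reachable.le_add_dist_of_adj {f : V → ℤ} (hf : ∀ x y, G.Adj x y → f x ≤ f y + 1)
    {u v : V} (h : G.Reachable u v) : f u ≤ f v + G.dist u v := by
  obtain ⟨p, hp⟩ := h.exists_walk_length_eq_dist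
  exact hp ▸ p.le_add_length_of_adj hf

end SimpleGraph

def AdjSuffixes (σ' τ' : Word) : Prop :=
  (σ' = [] ∧ τ'.toFinset.card ≤ 2) ∨
  (τ' = [] ∧ σ'.toFinset.card ≤ 2) ∨
  (∃ (i j : Letter) (k k' : ℕ), i ≠ j ∧
     σ' = i :: List.replicate k j ∧ τ' = j :: List.replicate k' i)

lemma wordAdj_iff {σ τ : Word} : WordAdj σ τ ↔
    σ ≠ τ ∧ ∃ β σ' τ' : Word, σ = β ++ σ' ∧ τ = β ++ τ' ∧ AdjSuffixes σ' τ' :=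
  Iff.rfl

lemma AdjSuffixes.take {σ' τ' : Word} (h : AdjSuffixes σ' τ') (r : ℕ) :
    AdjSuffixes (σ'.take r) (τ'.take r) := by
  rcases h with ⟨rfl, h⟩ | ⟨rfl, h⟩ | ⟨i, j, k, k', hij, rfl, rfl⟩
  · exact Or.inl ⟨by simp, (List.card_toFinset_mono (List.take_subset r τ')).trans h⟩
  · exact Or.inr (Or.inl ⟨by simp, (List.card_toFinset_mono (List.take_subset r σ')).trans h⟩)
  · cases r with
    | zero => exact Or.inl ⟨rfl, by simp⟩
    | succ r =>
      simp only [List.take_succ_cons, List.take_replicate]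
      exact Or.inr (Or.inr ⟨i, j, _, _, hij, rfl, rfl⟩)

lemma WordAdj.take {σ τ : Word} (h : WordAdj σ τ) (m : ℕ) :
    σ.take m = τ.take m ∨ WordAdj (σ.take m) (τ.take m) := by
  obtain ⟨-, β, σ', τ', rfl, rfl, hs⟩ := wordAdj_iff.1 h
  refine or_iff_not_imp_left.2 fun hne => ⟨hne, β.take m, _, _, List.take_append,
    List.take_append, hs.take _⟩

lemma WordAdj.cons {σ τ : Word} (h : WordAdj σ τ) (c : Letter) : WordAdj (c :: σ) (c :: τ) := by
  obtain ⟨hne, β, σ', τ', rfl, rfl, hs⟩ := wordAdj_iff.1 h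
  exact ⟨by simpa using hne, c :: β, σ', τ', rfl, rfl, hs⟩

lemma WordAdj.of_cons {c : Letter} {σ τ : Word} (h : WordAdj (c :: σ) (c :: τ)) :
    WordAdj σ τ := by
  obtain ⟨hne, β, σ', τ', hσ, hτ, hs⟩ := wordAdj_iff.1 h
  cases β with
  | cons d β =>
    simp only [List.cons_append, List.cons.injEq] at hσ hτ
    exact ⟨by simpa using hne, β, σ', τ', hσ.2, hτ.2, hs⟩
  | nil =>
    exfalso
    rcases hs with ⟨rfl, -⟩ | ⟨rfl, -⟩ | ⟨i, j, k, k', hij, rfl, rfl⟩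
    · simp at hσ
    · simp at hτ
    · simp only [List.nil_append, List.cons.injEq] at hσ hτ
      exact hij (hσ.1.symm.trans hτ.1)

lemma WordAdj.card_toFinset_tail_le_two {σ τ : Word} (h : WordAdj σ τ)
    (hhead : σ.head? ≠ τ.head?) : σ.tail.toFinset.card ≤ 2 := by
  obtain ⟨-, β, σ', τ', rfl, rfl, hs⟩ := wordAdj_iff.1 h
  cases β with
  | cons d β => simp at hhead
  | nil =>
    rcases hs with ⟨rfl, -⟩ | ⟨-, hs⟩ | ⟨i, j, k, k', -, rfl, -⟩
    · simp
    · exact (List.card_toFinset_mono (List.tail_subset σ')).trans hs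
    · simp only [List.nil_append, List.tail_cons]
      calc (List.replicate k j).toFinset.card ≤ [j].toFinset.card :=
            List.card_toFinset_mono fun x hx => by simp [List.eq_of_mem_replicate hx]
        _ ≤ 2 := by simp

lemma gt_adj {t : ℕ} {σ τ : Word} :
    (Gt t).Adj σ τ ↔ σ.length ≤ t ∧ τ.length ≤ t ∧ WordAdj σ τ :=
  Iff.rfl

lemma Lw_eq (σ : Word) : Lw σ = dW σ.length σ [] - 1 := by
  unfold Lw; split_ifs with h <;> simp [h, dW]

def consHom (c : Letter) {m t : ℕ} (h : m + 1 ≤ t) : Gt m →g Gt t where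
  toFun σ := c :: σ
  map_rel' {σ τ} hστ := by
    obtain ⟨hσ, hτ, hadj⟩ := gt_adj.1 hστ
    exact gt_adj.2 ⟨by simp; omega, by simp; omega, hadj.cons c⟩

lemma reachable_nil {m : ℕ} {σ : Word} (h : σ.length ≤ m) : (Gt m).Reachable σ [] := by
  induction σ using List.reverseRecOn with
  | nil => rfl
  | append_singleton σ c ih =>
    simp only [List.length_append, List.length_singleton] at h
    have hadj : (Gt m).Adj (σ ++ [c]) σ :=
      gt_adj.2 ⟨by simp; omega, by omega, by simp, σ, [c], [], rfl, by simp, by simp⟩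
    exact hadj.reachable.trans (ih (by omega))

lemma dW_nil_le_one {m : ℕ} {σ : Word} (hlen : σ.length ≤ m) (hcard : σ.toFinset.card ≤ 2) :
    dW m σ [] ≤ 1 := by
  rcases eq_or_ne σ [] with rfl | hne
  · simp [dW]
  · exact (dist_eq_one_iff_adj.2 (gt_adj.2 ⟨hlen, by simp, hne, [], σ, [], by simp, by simp,
      Or.inr (Or.inl ⟨rfl, hcard⟩)⟩)).le

lemma WordAdj.dW_take_nil_le_succ {σ τ : Word} (h : WordAdj σ τ) (m : ℕ) :
    dW m (σ.take m) [] ≤ dW m (τ.take m) [] + 1 := by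
  rcases h.take m with heq | hadj
  · rw [heq]; omega
  · have hG : (Gt m).Adj (σ.take m) (τ.take m) :=
      gt_adj.2 ⟨List.length_take_le _ _, List.length_take_le _ _, hadj⟩
    have := hG.reachable.dist_triangle_left []
    rwa [dist_eq_one_iff_adj.2 hG, add_comm] at this

noncomputable def branchPotential (c : Letter) (m : ℕ) : Word → ℕ
  | a :: σ => if a = c then dW m (σ.take m) [] - 1 else 0
  | [] => 0

lemma branchPotential_cons_self (c : Letter) (σ : Word) :
    branchPotential c σ.length (c :: σ) = Lw σ := by
  simp [branchPotential, Lw_eq]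

lemma branchPotential_of_head_ne {c : Letter} {σ : Word} (h : σ.head? ≠ some c) (m : ℕ) :
    branchPotential c m σ = 0 := by
  cases σ with
  | nil => rfl
  | cons a σ => simp_all [branchPotential]

lemma branchPotential_of_card_tail_le_two {σ : Word} (h : σ.tail.toFinset.card ≤ 2)
    (c : Letter) (m : ℕ) : branchPotential c m σ = 0 := by
  cases σ with
  | nil => rfl
  | cons a σ =>
    have := dW_nil_le_one (List.length_take_le m σ)
      ((List.card_toFinset_mono (List.take_subset m σ)).trans h)
    simp only [branchPotential]
    split_ifs <;> omega

lemma branchPotential_cons_le_succ {σ τ : Word} (h : WordAdj σ τ) (a c : Letter) (m : ℕ) :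
    branchPotential c m (a :: σ) ≤ branchPotential c m (a :: τ) + 1 := by
  have := h.dW_take_nil_le_succ m
  simp only [branchPotential]
  split_ifs <;> omega

lemma branchPotential_sub_le_succ {i j : Letter} (hij : i ≠ j) {t : ℕ} {σ τ : Word}
    (h : (Gt t).Adj σ τ) (m n : ℕ) :
    (branchPotential i m σ : ℤ) - branchPotential j n σ ≤
      branchPotential i m τ - branchPotential j n τ + 1 := by
  have hστ := (gt_adj.1 h).2.2
  have hτσ := (gt_adj.1 h.symm).2.2
  by_cases hhead : σ.head? = τ.head?
  · match σ, τ, hhead with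
    | [], [], _ => exact absurd rfl hστ.1
    | a :: σ, _ :: τ, rfl =>
      have hi := branchPotential_cons_le_succ hστ.of_cons a i m
      have hj := branchPotential_cons_le_succ hτσ.of_cons a j n
      by_cases ha : a = j
      · subst ha
        rw [branchPotential_of_head_ne (c := i) (by simpa using hij.symm),
          branchPotential_of_head_ne (c := i) (σ := a :: τ) (by simpa using hij.symm)]
        omega
      · rw [branchPotential_of_head_ne (c := j) (by simpa using ha),
          branchPotential_of_head_ne (c := j) (σ := a :: τ) (by simpa using ha)]
        omega
  · simp [branchPotential_of_card_tail_le_two (hστ.card_toFinset_tail_le_two hhead),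
      branchPotential_of_card_tail_le_two (hτσ.card_toFinset_tail_le_two (Ne.symm hhead))]

lemma Lw_add_Lw_le_dW {i j : Letter} (hij : i ≠ j) {t : ℕ} {σ τ : Word}
    (h : (Gt t).Reachable (i :: σ) (j :: τ)) : Lw σ + Lw τ ≤ dW t (i :: σ) (j :: τ) := by
  have := h.le_add_dist_of_adj
    (f := fun ρ => (branchPotential i σ.length ρ : ℤ) - branchPotential j τ.length ρ)
    fun _ _ hadj => branchPotential_sub_le_succ hij hadj _ _
  simp only [branchPotential_cons_self,
    branchPotential_of_head_ne (c := j) (σ := i :: σ) (by simpa using hij),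
    branchPotential_of_head_ne (c := i) (σ := j :: τ) (by simpa using hij.symm)] at this
  unfold dW
  omega

lemma reachable_cons_singleton (c : Letter) {t : ℕ} {σ : Word} (h : σ.length + 1 ≤ t) :
    (Gt t).Reachable (c :: σ) [c] :=
  (reachable_nil le_rfl).map (consHom c h)

lemma dist_cons_singleton_le (c : Letter) {t : ℕ} {σ : Word} (h : σ.length + 1 ≤ t) :
    (Gt t).dist (c :: σ) [c] ≤ Lw σ + 1 :=
  ((reachable_nil le_rfl).dist_map_le (consHom c h)).trans (by rw [Lw_eq, dW]; omega)

lemma gt_adj_singleton {i j : Letter} (hij : i ≠ j) {t : ℕ} (ht : 1 ≤ t) :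
    (Gt t).Adj [i] [j] :=
  gt_adj.2 ⟨ht, ht, by simpa using hij, [], [i], [j], rfl, rfl,
    Or.inr (Or.inr ⟨i, j, 0, 0, hij, rfl, rfl⟩)⟩

lemma reachable_cons_cons {i j : Letter} (hij : i ≠ j) {t : ℕ} {σ τ : Word}
    (hσ : σ.length + 1 ≤ t) (hτ : τ.length + 1 ≤ t) : (Gt t).Reachable (i :: σ) (j :: τ) :=
  (reachable_cons_singleton i hσ).trans <|
    (gt_adj_singleton hij (by omega)).reachable.trans (reachable_cons_singleton j hτ).symm

lemma dW_le_Lw_add_Lw_add_three {i j : Letter} (hij : i ≠ j) {t : ℕ} {σ τ : Word}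
    (hσ : σ.length + 1 ≤ t) (hτ : τ.length + 1 ≤ t) :
    dW t (i :: σ) (j :: τ) ≤ Lw σ + Lw τ + 3 := by
  have hadj := gt_adj_singleton hij (t := t) (by omega)
  have h₁ := (reachable_cons_singleton i hσ).dist_triangle_left (j :: τ)
  have h₂ := hadj.reachable.dist_triangle_left (j :: τ)
  have h₃ := dist_cons_singleton_le i hσ
  have h₄ := dist_cons_singleton_le j hτ
  rw [dist_eq_one_iff_adj.2 hadj, dist_comm (u := [j])] at h₂
  unfold dW
  omega

/-- For distinct letters `i ≠ j`, `t ≥ 1`, and words `σ, τ` of length at most `t-1`,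
`L(σ) + L(τ) ≤ d_t(iσ, jτ) ≤ L(σ) + L(τ) + 3`. -/
theorem dist_cross_bounds (t : ℕ) (ht : 1 ≤ t) (i j : Letter) (hij : i ≠ j)
    (σ τ : Word) (hσ : σ.length ≤ t - 1) (hτ : τ.length ≤ t - 1) :
    Lw σ + Lw τ ≤ dW t (i :: σ) (j :: τ) ∧
    dW t (i :: σ) (j :: τ) ≤ Lw σ + Lw τ + 3 := by
  have hσ' : σ.length + 1 ≤ t := by omega
  have hτ' : τ.length + 1 ≤ t := by omega
  exact ⟨Lw_add_Lw_le_dW hij (reachable_cons_cons hij hσ' hτ'),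
    dW_le_Lw_add_Lw_add_three hij hσ' hτ'⟩
end
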